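/- arXiv:1111.3669 — 3 statements merged into one kernel-verified Lean document; each statement's English description precedes it below -/
import Mathlib

section
/- Gaussian elimination for chain complexes (Bar-Natan): Let 𝒞 be an additive category and let I be a bounded cochain complex over 𝒞 of the form ⋯ → C --(α,β)--> A ⊕ D --[[φ,δ],[γ,ε]]--> B ⊕ E --(μ,ν)--> F → ⋯, where the differentials into and out of the biproducts are written in matrix form and the component φ : A → B is an isomorphism in 𝒞. Then I is chain homotopy equivalent to the bounded cochain complex II = ⋯ → C --β--> D --(ε − γ∘φ⁻¹∘δ)--> E --ν--> F → ⋯, in which all terms and differentials outside the displayed portion are unchanged. In particular, if δ = 0 or γ = 0, then I is chain homotopy equivalent to ⋯ → C --β--> D --ε--> E --ν--> F → ⋯. -/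
open CategoryTheory CategoryTheory.Limits

section Gauss

variable {𝒞 : Type*} [Category 𝒞] [Preadditive 𝒞] [HasBinaryBiproducts 𝒞]
variable (I II : CochainComplex 𝒞 ℤ) (n : ℤ) {A B D E : 𝒞}
variable (eI₁ : I.X (n + 1) ≅ A ⊞ D) (eI₂ : I.X (n + 2) ≅ B ⊞ E)
variable (φ : A ⟶ B) [IsIso φ] (δ : D ⟶ B) (γ : A ⟶ E)
variable (eII₁ : II.X (n + 1) ≅ D) (eII₂ : II.X (n + 2) ≅ E)
variable (eX : ∀ m : ℤ, m ≠ n + 1 → m ≠ n + 2 → (II.X m ≅ I.X m))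

noncomputable def gaussF (m : ℤ) : I.X m ⟶ II.X m :=
  if h1 : m = n + 1 then
    eqToHom (by rw [h1]) ≫ eI₁.hom ≫ biprod.snd ≫ eII₁.inv ≫ eqToHom (by rw [h1])
  else if h2 : m = n + 2 then
    eqToHom (by rw [h2]) ≫ eI₂.hom ≫ biprod.desc (-(inv φ ≫ γ)) (𝟙 E) ≫ eII₂.inv ≫
      eqToHom (by rw [h2])
  else (eX m h1 h2).inv

noncomputable def gaussG (m : ℤ) : II.X m ⟶ I.X m :=
  if h1 : m = n + 1 then
    eqToHom (by rw [h1]) ≫ eII₁.hom ≫ biprod.lift (-(δ ≫ inv φ)) (𝟙 D) ≫ eI₁.inv ≫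
      eqToHom (by rw [h1])
  else if h2 : m = n + 2 then
    eqToHom (by rw [h2]) ≫ eII₂.hom ≫ biprod.inr ≫ eI₂.inv ≫ eqToHom (by rw [h2])
  else (eX m h1 h2).hom

noncomputable def gaussH (i j : ℤ) : I.X i ⟶ I.X j :=
  if h : i = n + 2 ∧ j = n + 1 then
    -(eqToHom (by rw [h.1]) ≫ eI₂.hom ≫ biprod.desc (biprod.lift (inv φ) 0) 0 ≫
      eI₁.inv ≫ eqToHom (by rw [h.2]))
  else 0

lemma gaussF_one : gaussF I II n eI₁ eI₂ φ γ eII₁ eII₂ eX (n + 1) =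
    eI₁.hom ≫ biprod.snd ≫ eII₁.inv := by
  unfold gaussF; rw [dif_pos rfl]; simp

lemma gaussF_two : gaussF I II n eI₁ eI₂ φ γ eII₁ eII₂ eX (n + 2) =
    eI₂.hom ≫ biprod.desc (-(inv φ ≫ γ)) (𝟙 E) ≫ eII₂.inv := by
  unfold gaussF; rw [dif_neg (show (n + 2 : ℤ) ≠ n + 1 by omega), dif_pos rfl]; simp

lemma gaussF_other (m : ℤ) (h1 : m ≠ n + 1) (h2 : m ≠ n + 2) :
    gaussF I II n eI₁ eI₂ φ γ eII₁ eII₂ eX m = (eX m h1 h2).inv := by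
  unfold gaussF; rw [dif_neg h1, dif_neg h2]

lemma gaussG_one : gaussG I II n eI₁ eI₂ φ δ eII₁ eII₂ eX (n + 1) =
    eII₁.hom ≫ biprod.lift (-(δ ≫ inv φ)) (𝟙 D) ≫ eI₁.inv := by
  unfold gaussG; rw [dif_pos rfl]; simp

lemma gaussG_two : gaussG I II n eI₁ eI₂ φ δ eII₁ eII₂ eX (n + 2) =
    eII₂.hom ≫ biprod.inr ≫ eI₂.inv := by
  unfold gaussG; rw [dif_neg (show (n + 2 : ℤ) ≠ n + 1 by omega), dif_pos rfl]; simp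

lemma gaussG_other (m : ℤ) (h1 : m ≠ n + 1) (h2 : m ≠ n + 2) :
    gaussG I II n eI₁ eI₂ φ δ eII₁ eII₂ eX m = (eX m h1 h2).hom := by
  unfold gaussG; rw [dif_neg h1, dif_neg h2]

lemma gaussH_eq : gaussH I n eI₁ eI₂ φ (n + 2) (n + 1) =
    -(eI₂.hom ≫ biprod.desc (biprod.lift (inv φ) 0) 0 ≫ eI₁.inv) := by
  unfold gaussH; rw [dif_pos ⟨rfl, rfl⟩]; simp

lemma gaussH_ne (i j : ℤ) (h : ¬(i = n + 2 ∧ j = n + 1)) :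
    gaussH I n eI₁ eI₂ φ i j = 0 := by
  unfold gaussH; rw [dif_neg h]

end Gauss

/-- **Gaussian elimination for chain complexes (Bar-Natan).**
Let `𝒞` be an additive category and `I` a bounded cochain complex over `𝒞` of the form
`⋯ → C --(α,β)--> A ⊕ D --[[φ,δ],[γ,ε]]--> B ⊕ E --(μ,ν)--> F → ⋯`
(with `A ⊕ D` in degree `n+1` and `B ⊕ E` in degree `n+2`, differentials written in
matrix form with respect to the biproduct decompositions), where `φ : A ⟶ B` is an
isomorphism.  Then `I` is chain homotopy equivalent to the bounded cochain complex
`II = ⋯ → C --β--> D --(ε − γ∘φ⁻¹∘δ)--> E --ν--> F → ⋯` in which all terms and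
differentials outside the displayed portion are unchanged.

`II` is any complex equipped with identifications `II.X (n+1) ≅ D`, `II.X (n+2) ≅ E`
and `II.X m ≅ I.X m` elsewhere, under which its differentials are `β`,
`ε − δ ≫ φ⁻¹ ≫ γ`, `ν`, and those of `I` elsewhere.  (The components
`β = d ≫ pr_D` and `ν = in_E ≫ d` are expressed directly from the differentials of
`I`.)  In particular, if `δ = 0` or `γ = 0`, the middle differential is just `ε`. -/
theorem stmt_0 {𝒞 : Type*} [Category 𝒞] [Preadditive 𝒞] [HasBinaryBiproducts 𝒞]
    (I II : CochainComplex 𝒞 ℤ) (n : ℤ)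
    (hbdd : ∃ a b : ℤ, ∀ m : ℤ, (m < a ∨ b < m) → IsZero (I.X m))
    (A B D E : 𝒞)
    (eI₁ : I.X (n + 1) ≅ A ⊞ D) (eI₂ : I.X (n + 2) ≅ B ⊞ E)
    (φ : A ⟶ B) (δ : D ⟶ B) (γ : A ⟶ E) (ε : D ⟶ E) [IsIso φ]
    (hI_mid : I.d (n + 1) (n + 2) =
      eI₁.hom ≫ biprod.desc (biprod.lift φ γ) (biprod.lift δ ε) ≫ eI₂.inv)
    (eII₁ : II.X (n + 1) ≅ D) (eII₂ : II.X (n + 2) ≅ E)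
    (eX : ∀ m : ℤ, m ≠ n + 1 → m ≠ n + 2 → (II.X m ≅ I.X m))
    (hII_mid : II.d (n + 1) (n + 2) =
      eII₁.hom ≫ (ε - δ ≫ inv φ ≫ γ) ≫ eII₂.inv)
    (hII_in : II.d n (n + 1) =
      (eX n (by omega) (by omega)).hom ≫ I.d n (n + 1) ≫ eI₁.hom ≫ biprod.snd ≫
        eII₁.inv)
    (hII_out : II.d (n + 2) (n + 3) =
      eII₂.hom ≫ biprod.inr ≫ eI₂.inv ≫ I.d (n + 2) (n + 3) ≫
        (eX (n + 3) (by omega) (by omega)).inv)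
    (hII_other : ∀ m : ℤ, ∀ h₀ : m ≠ n, ∀ h₁ : m ≠ n + 1, ∀ h₂ : m ≠ n + 2,
      II.d m (m + 1) =
        (eX m h₁ h₂).hom ≫ I.d m (m + 1) ≫ (eX (m + 1) (by omega) (by omega)).inv) :
    Nonempty (HomotopyEquiv I II) := by
  classical
  have hd0 : I.d n (n + 1) ≫ eI₁.hom ≫ biprod.desc (biprod.lift φ γ) (biprod.lift δ ε) = 0 := by
    have h := I.d_comp_d n (n + 1) (n + 2)
    rw [hI_mid] at h
    rw [← cancel_mono eI₂.inv]
    simpa using h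
  have hd2 : biprod.desc (biprod.lift φ γ) (biprod.lift δ ε) ≫ eI₂.inv ≫ I.d (n + 2) (n + 3) = 0 := by
    have h := I.d_comp_d (n + 1) (n + 2) (n + 3)
    rw [hI_mid] at h
    rw [← cancel_epi eI₁.hom]
    simpa using h
  have habsF : biprod.desc (biprod.lift φ γ) (biprod.lift δ ε) ≫
      biprod.desc (-(inv φ ≫ γ)) (𝟙 E) = biprod.snd ≫ (ε - δ ≫ inv φ ≫ γ) := by
    ext <;> simp <;> abel
  have habsG : biprod.lift (-(δ ≫ inv φ)) (𝟙 D) ≫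
      biprod.desc (biprod.lift φ γ) (biprod.lift δ ε) =
      (ε - δ ≫ inv φ ≫ γ) ≫ biprod.inr := by
    ext <;> simp <;> abel
  have hkeyF : biprod.desc (-(inv φ ≫ γ)) (𝟙 E) ≫ biprod.inr ≫ eI₂.inv ≫
      I.d (n + 2) (n + 3) = eI₂.inv ≫ I.d (n + 2) (n + 3) := by
    have h : biprod.desc (-(inv φ ≫ γ)) (𝟙 E) ≫ biprod.inr =
        𝟙 (B ⊞ E) - biprod.desc (biprod.lift (inv φ) 0) 0 ≫
          biprod.desc (biprod.lift φ γ) (biprod.lift δ ε) := by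
      ext <;> simp
    simp [reassoc_of% h, hd2]
  have hkeyG : I.d n (n + 1) ≫ eI₁.hom ≫ biprod.snd ≫
      biprod.lift (-(δ ≫ inv φ)) (𝟙 D) ≫ eI₁.inv = I.d n (n + 1) := by
    have h : biprod.snd ≫ biprod.lift (-(δ ≫ inv φ)) (𝟙 D) =
        𝟙 (A ⊞ D) - biprod.desc (biprod.lift φ γ) (biprod.lift δ ε) ≫
          biprod.desc (biprod.lift (inv φ) 0) 0 := by
      ext <;> simp
    rw [← cancel_mono eI₁.hom]
    simp [h, reassoc_of% hd0]
  have hFone := gaussF_one I II n eI₁ eI₂ φ γ eII₁ eII₂ eX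
  have hFtwo := gaussF_two I II n eI₁ eI₂ φ γ eII₁ eII₂ eX
  have hFo := gaussF_other I II n eI₁ eI₂ φ γ eII₁ eII₂ eX
  have hGone := gaussG_one I II n eI₁ eI₂ φ δ eII₁ eII₂ eX
  have hGtwo := gaussG_two I II n eI₁ eI₂ φ δ eII₁ eII₂ eX
  have hGo := gaussG_other I II n eI₁ eI₂ φ δ eII₁ eII₂ eX
  have hHeq := gaussH_eq I n eI₁ eI₂ φ
  have hHne := gaussH_ne I n eI₁ eI₂ φ
  refine ⟨{
    hom := { f := gaussF I II n eI₁ eI₂ φ γ eII₁ eII₂ eX, comm' := ?_ },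
    inv := { f := gaussG I II n eI₁ eI₂ φ δ eII₁ eII₂ eX, comm' := ?_ },
    homotopyHomInvId := ?_,
    homotopyInvHomId := ?_ }⟩
  · -- F is a chain map
    intro i j hij
    have hij' : i + 1 = j := hij
    by_cases h0 : i = n
    · obtain rfl := h0.symm
      obtain rfl : j = n + 1 := by omega
      rw [hII_in, hFone, hFo n (by omega) (by omega)]
      simp
    by_cases h1 : i = n + 1
    · obtain rfl := h1.symm
      obtain rfl : j = n + 2 := by omega
      rw [hII_mid, hI_mid, hFone, hFtwo]
      simp [reassoc_of% habsF]
    by_cases h2 : i = n + 2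
    · obtain rfl := h2.symm
      obtain rfl : j = n + 3 := by omega
      rw [hII_out, hFtwo, hFo (n+3) (by omega) (by omega)]
      simp [reassoc_of% hkeyF]
    · obtain rfl : j = i + 1 := by omega
      rw [hII_other i h0 h1 h2, hFo i h1 h2, hFo (i+1) (by omega) (by omega)]
      simp
  · -- G is a chain map
    intro i j hij
    have hij' : i + 1 = j := hij
    by_cases h0 : i = n
    · obtain rfl := h0.symm
      obtain rfl : j = n + 1 := by omega
      rw [hII_in, hGone, hGo n (by omega) (by omega)]
      simp [hkeyG]
    by_cases h1 : i = n + 1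
    · obtain rfl := h1.symm
      obtain rfl : j = n + 2 := by omega
      rw [hII_mid, hI_mid, hGone, hGtwo]
      simp [reassoc_of% habsG]
    by_cases h2 : i = n + 2
    · obtain rfl := h2.symm
      obtain rfl : j = n + 3 := by omega
      rw [hII_out, hGtwo, hGo (n+3) (by omega) (by omega)]
      simp
    · obtain rfl : j = i + 1 := by omega
      rw [hII_other i h0 h1 h2, hGo i h1 h2, hGo (i+1) (by omega) (by omega)]
      simp
  · -- homotopy F ≫ G ~ 𝟙 I
    refine { hom := gaussH I n eI₁ eI₂ φ, zero := ?_, comm := ?_ }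
    · intro i j hrel
      apply hHne
      rintro ⟨rfl, rfl⟩
      exact hrel (by simp only [ComplexShape.up_Rel]; omega)
    · intro i
      simp only [HomologicalComplex.comp_f, HomologicalComplex.id_f]
      by_cases h1 : i = n + 1
      · obtain rfl := h1.symm
        rw [dNext_eq _ (show (ComplexShape.up ℤ).Rel (n + 1) (n + 2) from by
              simp only [ComplexShape.up_Rel]; omega),
          prevD_eq _ (show (ComplexShape.up ℤ).Rel n (n + 1) from by
              simp only [ComplexShape.up_Rel])]
        rw [hHeq, hHne (n+1) n (by omega), hFone, hGone, hI_mid]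
        rw [← cancel_mono eI₁.hom, ← cancel_epi eI₁.inv]
        simp
        ext <;> simp
      by_cases h2 : i = n + 2
      · obtain rfl := h2.symm
        rw [dNext_eq _ (show (ComplexShape.up ℤ).Rel (n + 2) (n + 3) from by
              simp only [ComplexShape.up_Rel]; omega),
          prevD_eq _ (show (ComplexShape.up ℤ).Rel (n + 1) (n + 2) from by
              simp only [ComplexShape.up_Rel]; omega)]
        rw [hHne (n+3) (n+2) (by omega), hHeq, hFtwo, hGtwo, hI_mid]
        rw [← cancel_mono eI₂.hom, ← cancel_epi eI₂.inv]
        simp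
        ext <;> simp
      · rw [dNext_eq _ (show (ComplexShape.up ℤ).Rel i (i + 1) from by
              simp only [ComplexShape.up_Rel]),
          prevD_eq _ (show (ComplexShape.up ℤ).Rel (i - 1) i from by
              simp only [ComplexShape.up_Rel]; omega)]
        rw [hHne (i+1) i (by omega), hHne i (i-1) (by omega), hFo i h1 h2, hGo i h1 h2]
        simp
  · -- G ≫ F = 𝟙 II
    refine Homotopy.ofEq ?_
    ext m
    simp only [HomologicalComplex.comp_f, HomologicalComplex.id_f]
    by_cases h1 : m = n + 1
    · obtain rfl := h1.symm
      rw [hFone, hGone]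
      simp
    by_cases h2 : m = n + 2
    · obtain rfl := h2.symm
      rw [hFtwo, hGtwo]
      simp
    · rw [hFo m h1 h2, hGo m h1 h2]
      simp
end

section
/- Let R be a principal ideal domain, let 𝔪 ⊂ R be a maximal ideal, and let C be a bounded cochain complex of finitely generated free R-modules. If H^n(C ⊗_R R/𝔪) = 0 for some n, then H^n(C) is a torsion R-module (every element of H^n(C) is annihilated by some nonzero element of R). -/
open CategoryTheory HomologicalComplex

open scoped ChangeOfRings

open CategoryTheory HomologicalComplex
open scoped ChangeOfRings

section aux

variable {R : Type} [CommRing R] (I : Ideal R)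

/-- Identity linear equivalence between `R ⧸ I` with the restricted-scalars module
structure and `R ⧸ I` with the standard module structure. -/
def quotRestrictEquiv :
    ((ModuleCat.restrictScalars (Ideal.Quotient.mk I)).obj
      (ModuleCat.of (R ⧸ I) (R ⧸ I))) ≃ₗ[R] (R ⧸ I) where
  toFun x := x
  invFun x := x
  left_inv _ := rfl
  right_inv _ := rfl
  map_add' _ _ := rfl
  map_smul' r x := by
    obtain ⟨s, rfl⟩ := Ideal.Quotient.mk_surjective x
    show Ideal.Quotient.mk I r * Ideal.Quotient.mk I s = r • Ideal.Quotient.mk I s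
    rw [← map_mul]
    rfl

noncomputable def extQuotEquiv (M : ModuleCat R) :
    TensorProduct R
      (↥((ModuleCat.restrictScalars (Ideal.Quotient.mk I)).obj
        (ModuleCat.of (R ⧸ I) (R ⧸ I)))) M ≃ₗ[R] (M ⧸ (I • (⊤ : Submodule R M))) :=
  (TensorProduct.congr (quotRestrictEquiv I) (LinearEquiv.refl R M)) ≪≫ₗ
    TensorProduct.quotTensorEquivQuotSMul M I

lemma ext_exists (M : ModuleCat R)
    (x : ((ModuleCat.extendScalars (Ideal.Quotient.mk I)).obj M)) :
    ∃ m : M, ((1 : R ⧸ I) ⊗ₜ[R, Ideal.Quotient.mk I] m) = x := by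
  induction x using TensorProduct.induction_on with
  | zero => exact ⟨0, TensorProduct.tmul_zero _ _⟩
  | tmul s m =>
      obtain ⟨r, rfl⟩ := Ideal.Quotient.mk_surjective s
      refine ⟨r • m, ?_⟩
      have h := TensorProduct.smul_tmul (R := R) (R' := R)
        (M := ((ModuleCat.restrictScalars (Ideal.Quotient.mk I)).obj
          (ModuleCat.of (R ⧸ I) (R ⧸ I)))) (N := M) r (1 : R ⧸ I) m
      refine h.symm.trans ?_
      congr 1
      show Ideal.Quotient.mk I r * 1 = Ideal.Quotient.mk I r
      rw [mul_one]
  | add x y hx hy =>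
      obtain ⟨mx, rfl⟩ := hx
      obtain ⟨my, rfl⟩ := hy
      exact ⟨mx + my, TensorProduct.tmul_add _ _ _⟩

lemma ext_tmul_eq_zero (M : ModuleCat R) (m : M)
    (h : ((1 : R ⧸ I) ⊗ₜ[R, Ideal.Quotient.mk I] m)
      = (0 : ((ModuleCat.extendScalars (Ideal.Quotient.mk I)).obj M))) :
    m ∈ I • (⊤ : Submodule R M) := by
  have h2 : extQuotEquiv I M ((1 : R ⧸ I) ⊗ₜ[R, Ideal.Quotient.mk I] m) = 0 := by
    have := congrArg (extQuotEquiv I M) h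
    exact this.trans (extQuotEquiv I M).map_zero
  have h3 : extQuotEquiv I M ((1 : R ⧸ I) ⊗ₜ[R, Ideal.Quotient.mk I] m)
      = Submodule.Quotient.mk m := by
    erw [extQuotEquiv, LinearEquiv.trans_apply, TensorProduct.congr_tmul]
    have h1 : quotRestrictEquiv I (1 : R ⧸ I) = Ideal.Quotient.mk I 1 := by
      show (1 : R ⧸ I) = Ideal.Quotient.mk I 1
      exact (map_one _).symm
    rw [h1, LinearEquiv.refl_apply, TensorProduct.quotTensorEquivQuotSMul_mk_tmul, one_smul]
  rw [h3] at h2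
  rwa [Submodule.Quotient.mk_eq_zero] at h2

end aux


/-- Let `R` be a PID, `𝔪 ⊂ R` a maximal ideal, and `C` a bounded cochain complex of
finitely generated free `R`-modules.  If `H^n(C ⊗_R R/𝔪) = 0` for some `n`, then
`H^n(C)` is a torsion `R`-module: every element of `H^n(C)` is annihilated by some
nonzero element of `R`.  Tensoring with the residue field `R ⧸ 𝔪` is performed by
applying the extension-of-scalars functor in each degree. -/
theorem stmt_4 (R : Type) [CommRing R] [IsDomain R] [IsPrincipalIdealRing R]
    (𝔪 : Ideal R) [𝔪.IsMaximal]
    (C : CochainComplex (ModuleCat R) ℤ)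
    (hfree : ∀ n : ℤ, Module.Free R (C.X n))
    (hfg : ∀ n : ℤ, Module.Finite R (C.X n))
    (hbdd : ∃ a b : ℤ, ∀ n : ℤ, (n < a ∨ b < n) → Limits.IsZero (C.X n))
    (n : ℤ)
    (hvanish : Limits.IsZero
      ((((ModuleCat.extendScalars (Ideal.Quotient.mk 𝔪)).mapHomologicalComplex
        (ComplexShape.up ℤ)).obj C).homology n)) :
    ∀ x : C.homology n, ∃ r : R, r ≠ 0 ∧ r • x = 0 := by
  classical
  set f := Ideal.Quotient.mk 𝔪 with hf
  set S := C.sc n with hSdef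
  set D := ((ModuleCat.extendScalars f).mapHomologicalComplex (ComplexShape.up ℤ)).obj C with hD
  obtain ⟨p, hp⟩ := (IsPrincipalIdealRing.principal 𝔪).principal
  have hp' : 𝔪 = Ideal.span {p} := hp
  -- exactness of the reduced complex at n
  have hex : (D.sc n).Exact := (ShortComplex.exact_iff_isZero_homology _).2 hvanish
  rw [ShortComplex.moduleCat_exact_iff] at hex
  -- every homology class lies in 𝔪 • ⊤
  have key : ∀ (z : ↥(C.X n)) (hz : z ∈ LinearMap.ker S.g.hom),
      (Submodule.Quotient.mk ⟨z, hz⟩ : ↥S.moduleCatLeftHomologyData.H) ∈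
        𝔪 • (⊤ : Submodule R ↥S.moduleCatLeftHomologyData.H) := by
    intro z hz
    have hz' : C.d n ((ComplexShape.up ℤ).next n) z = 0 := hz
    have hgz : (D.sc n).g (((1 : R ⧸ 𝔪) ⊗ₜ[R, f] z :
        ((ModuleCat.extendScalars f).obj (C.X n)))) = 0 := by
      show (ModuleCat.extendScalars f).map (C.d n ((ComplexShape.up ℤ).next n))
        ((1 : R ⧸ 𝔪) ⊗ₜ[R, f] z) = 0
      rw [ModuleCat.ExtendScalars.map_tmul, hz', TensorProduct.tmul_zero]
      rfl
    obtain ⟨w, hw⟩ := hex _ hgz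
    obtain ⟨y1, rfl⟩ := ext_exists 𝔪 (C.X ((ComplexShape.up ℤ).prev n)) w
    have hw' : ((1 : R ⧸ 𝔪) ⊗ₜ[R, f] (C.d ((ComplexShape.up ℤ).prev n) n y1) :
        ((ModuleCat.extendScalars f).obj (C.X n))) = (1 : R ⧸ 𝔪) ⊗ₜ[R, f] z :=
      (ModuleCat.ExtendScalars.map_tmul f (C.d ((ComplexShape.up ℤ).prev n) n)
        (1 : R ⧸ 𝔪) y1).symm.trans hw
    have hker : z - C.d ((ComplexShape.up ℤ).prev n) n y1 ∈ 𝔪 • (⊤ : Submodule R ↥(C.X n)) := by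
      apply ext_tmul_eq_zero
      exact (TensorProduct.tmul_sub _ _ _).trans (sub_eq_zero.mpr hw'.symm)
    rw [hp', Submodule.ideal_span_singleton_smul] at hker
    rw [← SetLike.mem_coe, Submodule.coe_pointwise_smul] at hker
    obtain ⟨c, -, hc⟩ := hker
    replace hc : p • c = z - C.d ((ComplexShape.up ℤ).prev n) n y1 := hc
    by_cases hp0 : p = 0
    · -- then z is a coboundary, so its class is zero
      rw [hp0, zero_smul] at hc
      have hzz : z = C.d ((ComplexShape.up ℤ).prev n) n y1 := (sub_eq_zero.mp hc.symm)
      have h0 : (Submodule.Quotient.mk ⟨z, hz⟩ : ↥S.moduleCatLeftHomologyData.H) = 0 := by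
        rw [Submodule.Quotient.mk_eq_zero]
        exact ⟨y1, Subtype.ext hzz.symm⟩
      rw [h0]
      exact Submodule.zero_mem _
    · -- z - d y1 = p • c with c a cocycle
      haveI := hfree ((ComplexShape.up ℤ).next n)
      have hdd : C.d n ((ComplexShape.up ℤ).next n)
          (C.d ((ComplexShape.up ℤ).prev n) n y1) = 0 := by
        have h := C.d_comp_d ((ComplexShape.up ℤ).prev n) n ((ComplexShape.up ℤ).next n)
        calc C.d n ((ComplexShape.up ℤ).next n) (C.d ((ComplexShape.up ℤ).prev n) n y1)
            = (C.d ((ComplexShape.up ℤ).prev n) n ≫ C.d n ((ComplexShape.up ℤ).next n)) y1 := rfl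
          _ = 0 := by rw [h]; rfl
      have h1 : p • (C.d n ((ComplexShape.up ℤ).next n) c) = 0 := by
        rw [← map_smul, hc, map_sub, hz', hdd, sub_zero]
      have hcnext : C.d n ((ComplexShape.up ℤ).next n) c = 0 :=
        (smul_eq_zero.mp h1).resolve_left hp0
      have hcmem : c ∈ LinearMap.ker S.g.hom := hcnext
      have heq : (Submodule.Quotient.mk ⟨z, hz⟩ : ↥S.moduleCatLeftHomologyData.H) =
          p • (Submodule.Quotient.mk ⟨c, hcmem⟩ : ↥S.moduleCatLeftHomologyData.H) := by
        rw [← Submodule.Quotient.mk_smul, ← sub_eq_zero, ← Submodule.Quotient.mk_sub,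
          Submodule.Quotient.mk_eq_zero]
        refine ⟨y1, Subtype.ext ?_⟩
        show C.d ((ComplexShape.up ℤ).prev n) n y1 = z - p • c
        rw [hc, sub_sub_cancel]
      rw [heq]
      exact Submodule.smul_mem_smul (M := ↥S.moduleCatLeftHomologyData.H)
        (hp'.symm ▸ Ideal.mem_span_singleton_self p)
        Submodule.mem_top
  -- finiteness of the homology
  haveI : Module.Finite R ↥S.X₂ := hfg n
  haveI : IsNoetherian R ↥S.X₂ := isNoetherian_of_isNoetherianRing_of_finite R ↥S.X₂
  haveI : Module.Finite R ↥(LinearMap.ker S.g.hom) :=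
    Module.Finite.of_injective (LinearMap.ker S.g.hom).subtype (Submodule.injective_subtype _)
  haveI hfin : Module.Finite R ↥S.moduleCatLeftHomologyData.H :=
    Module.Finite.of_surjective (LinearMap.range S.moduleCatToCycles).mkQ
      (Submodule.Quotient.mk_surjective _)
  have hle : (⊤ : Submodule R ↥S.moduleCatLeftHomologyData.H) ≤
      𝔪 • (⊤ : Submodule R ↥S.moduleCatLeftHomologyData.H) := by
    rintro y -
    obtain ⟨⟨z, hz⟩, rfl⟩ := Submodule.Quotient.mk_surjective _ y
    exact key z hz
  obtain ⟨r, hr1, hr0⟩ :=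
    Submodule.exists_sub_one_mem_and_smul_eq_zero_of_fg_of_le_smul 𝔪
      (⊤ : Submodule R ↥S.moduleCatLeftHomologyData.H) hfin.fg_top hle
  have hrne : r ≠ 0 := by
    rintro rfl
    rw [zero_sub] at hr1
    exact (Ideal.IsMaximal.ne_top ‹𝔪.IsMaximal›)
      ((Ideal.eq_top_iff_one 𝔪).mpr (by simpa using 𝔪.neg_mem hr1))
  intro x
  refine ⟨r, hrne, ?_⟩
  have hmono : Function.Injective S.moduleCatHomologyIso.hom := by
    rw [← ModuleCat.mono_iff_injective]
    infer_instance
  apply hmono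
  erw [map_smul, map_zero]
  exact hr0 _ Submodule.mem_top
end

section
/- Let N be a positive integer and R = ℂ[a]. Let C be a bounded cochain complex with C^n = R^{k_n} (with k_n = 0 for all but finitely many n), together with degree functions d_n : Fin k_n → ℤ, such that each differential C^n → C^{n+1} is given by a matrix M^n over R each of whose entries M^n_{ij} is either 0 or of the form c·a^m with c ∈ ℂ∖{0}, m ≥ 0 and d_n(j) = d_{n+1}(i) + 2N·m. Then C is isomorphic, as a cochain complex of R-modules, to a finite direct sum of complexes each of which is either (1) a copy of R concentrated in a single cohomological degree with zero differentials, or (2) a complex 0 → R --a^k--> R → 0 concentrated in two consecutive cohomological degrees, whose only nonzero differential is multiplication by a^k for some integer k ≥ 0. -/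
open Polynomial

set_option linter.unusedSectionVars false
set_option maxHeartbeats 1000000

namespace Stmt6
open Matrix

variable (N : ℕ)

/-- graded entry of degree-difference `δ` -/
def GE (δ : ℤ) (p : Polynomial ℂ) : Prop :=
  p = 0 ∨ ∃ (c : ℂ) (m : ℕ), c ≠ 0 ∧ p = C c * X ^ m ∧ δ = 2 * (N : ℤ) * m

lemma GE.zero (δ : ℤ) : GE N δ 0 := Or.inl rfl

lemma GE.neg {δ : ℤ} {p : Polynomial ℂ} (h : GE N δ p) : GE N δ (-p) := by
  rcases h with h | ⟨c, m, hc, hp, hd⟩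
  · simp [GE, h]
  · exact Or.inr ⟨-c, m, neg_ne_zero.2 hc, by rw [hp]; ring_nf; simp [map_neg], hd⟩

lemma GE.mul {δ₁ δ₂ δ : ℤ} {p q : Polynomial ℂ} (hp : GE N δ₁ p) (hq : GE N δ₂ q)
    (hδ : δ = δ₁ + δ₂) : GE N δ (p * q) := by
  rcases hp with h | ⟨c₁, m₁, hc₁, hp, hd₁⟩
  · simp [GE, h]
  rcases hq with h | ⟨c₂, m₂, hc₂, hq, hd₂⟩
  · simp [GE, h]
  refine Or.inr ⟨c₁ * c₂, m₁ + m₂, mul_ne_zero hc₁ hc₂, ?_, ?_⟩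
  · rw [hp, hq, C_mul]; ring
  · subst hδ hd₁ hd₂; push_cast; ring

lemma GE.add (hN : 0 < N) {δ : ℤ} {p q : Polynomial ℂ} (hp : GE N δ p) (hq : GE N δ q) :
    GE N δ (p + q) := by
  rcases hp with h | ⟨c₁, m₁, hc₁, hp, hd₁⟩
  · simpa [h] using hq
  rcases hq with h | ⟨c₂, m₂, hc₂, hq, hd₂⟩
  · rw [h, add_zero]; exact Or.inr ⟨c₁, m₁, hc₁, hp, hd₁⟩
  have hm : m₁ = m₂ := by
    have h2N : (2 * (N : ℤ)) ≠ 0 := by positivity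
    have h' := hd₁.symm.trans hd₂
    rw [mul_assoc, mul_assoc] at h'
    have : (m₁ : ℤ) = m₂ := mul_left_cancel₀ (by positivity : ((2:ℤ)*N) ≠ 0) (by
      rw [mul_assoc, mul_assoc]; exact h')
    exact_mod_cast this
  subst hm
  by_cases hc : c₁ + c₂ = 0
  · left; rw [hp, hq, ← add_mul, ← map_add, hc]; simp
  · exact Or.inr ⟨c₁ + c₂, m₁, hc, by rw [hp, hq, ← add_mul, ← map_add], hd₁⟩

lemma GE.sum (hN : 0 < N) {δ : ℤ} {ι : Type*} (s : Finset ι) (f : ι → Polynomial ℂ)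
    (h : ∀ x ∈ s, GE N δ (f x)) : GE N δ (∑ x ∈ s, f x) :=
  Finset.sum_induction f (GE N δ) (fun _ _ ha hb => GE.add N hN ha hb) (GE.zero N δ) h

lemma GE.elim {δ : ℤ} {p : Polynomial ℂ} (h : GE N δ p) (hp : p ≠ 0) :
    p = C p.leadingCoeff * X ^ p.natDegree ∧ p.leadingCoeff ≠ 0 ∧
      δ = 2 * (N : ℤ) * p.natDegree := by
  rcases h with h | ⟨c, m, hc, hpe, hd⟩
  · exact absurd h hp
  have hdeg : p.natDegree = m := by rw [hpe]; exact natDegree_C_mul_X_pow m c hc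
  have hlc : p.leadingCoeff = c := by
    rw [hpe]; simp [leadingCoeff, natDegree_C_mul_X_pow m c hc, coeff_C_mul, coeff_X_pow]
  refine ⟨?_, by rw [hlc]; exact hc, by rw [hdeg]; exact hd⟩
  rw [hlc, hdeg]; exact hpe

lemma GE.of_eq {δ δ' : ℤ} {p : Polynomial ℂ} (h : GE N δ p) (e : δ = δ') : GE N δ' p :=
  e ▸ h


section mats
variable {ι κ : Type*} [Fintype ι] [DecidableEq ι] [Fintype κ] [DecidableEq κ]

/-- the matrix `u eᵢᵀ` -/
noncomputable def colMat (i : ι) (u : ι → Polynomial ℂ) : Matrix ι ι (Polynomial ℂ) :=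
  Matrix.of fun a b => if b = i then u a else 0

/-- the matrix `e_j wᵀ` -/
noncomputable def rowMat (j : ι) (w : ι → Polynomial ℂ) : Matrix ι ι (Polynomial ℂ) :=
  Matrix.of fun a b => if a = j then w b else 0

lemma colMat_mul (i : ι) (u : ι → Polynomial ℂ) (Y : Matrix ι κ (Polynomial ℂ)) (a : ι) (b : κ) :
    (colMat i u * Y) a b = u a * Y i b := by
  simp [colMat, Matrix.mul_apply, ite_mul, zero_mul]

lemma mul_colMat (i : ι) (u : ι → Polynomial ℂ) (Y : Matrix κ ι (Polynomial ℂ)) (a : κ) (b : ι) :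
    (Y * colMat i u) a b = if b = i then ∑ s, Y a s * u s else 0 := by
  simp only [colMat, Matrix.mul_apply, Matrix.of_apply, mul_ite, mul_zero]
  split <;> simp

lemma rowMat_mul (j : ι) (w : ι → Polynomial ℂ) (Y : Matrix ι κ (Polynomial ℂ)) (a : ι) (b : κ) :
    (rowMat j w * Y) a b = if a = j then ∑ s, w s * Y s b else 0 := by
  simp only [rowMat, Matrix.mul_apply, Matrix.of_apply, ite_mul, zero_mul]
  split <;> simp

lemma mul_rowMat (j : ι) (w : ι → Polynomial ℂ) (Y : Matrix κ ι (Polynomial ℂ)) (a : κ) (b : ι) :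
    (Y * rowMat j w) a b = Y a j * w b := by
  simp [rowMat, Matrix.mul_apply, mul_ite, mul_zero]

lemma colMat_sq (i : ι) (u : ι → Polynomial ℂ) (hu : u i = 0) :
    colMat i u * colMat i u = 0 := by
  ext a b
  rw [colMat_mul]
  simp [colMat, hu]

lemma rowMat_sq (j : ι) (w : ι → Polynomial ℂ) (hw : w j = 0) :
    rowMat j w * rowMat j w = 0 := by
  ext a b
  rw [mul_rowMat]
  simp [rowMat, hw]

lemma one_add_mul_one_sub (A : Matrix ι ι (Polynomial ℂ)) (hA : A * A = 0) :
    (1 + A) * (1 - A) = 1 := by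
  rw [mul_sub, add_mul, add_mul, hA, one_mul, mul_one]
  abel_nf
  simp

lemma one_sub_mul_one_add (A : Matrix ι ι (Polynomial ℂ)) (hA : A * A = 0) :
    (1 - A) * (1 + A) = 1 := by
  rw [sub_mul, mul_add, mul_add, hA, one_mul, mul_one]
  abel_nf
  simp

end mats

variable (k : ℤ → ℕ)

/-- family of matrices, the differentials of the complex -/
abbrev Fam := ∀ n : ℤ, Matrix (Fin (k (n + 1))) (Fin (k n)) (Polynomial ℂ)

/-- family of square matrices which is `Q` at `n₀` and `1` elsewhere -/
noncomputable def onePt (n₀ : ℤ) (Q : Matrix (Fin (k n₀)) (Fin (k n₀)) (Polynomial ℂ)) :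
    ∀ t : ℤ, Matrix (Fin (k t)) (Fin (k t)) (Polynomial ℂ) :=
  fun t => if h : t = n₀ then cast (by rw [h]) Q else 1

lemma onePt_same (n₀ : ℤ) (Q : Matrix (Fin (k n₀)) (Fin (k n₀)) (Polynomial ℂ)) :
    onePt k n₀ Q n₀ = Q := by
  rw [onePt, dif_pos rfl, cast_eq]

lemma onePt_other (n₀ : ℤ) (Q : Matrix (Fin (k n₀)) (Fin (k n₀)) (Polynomial ℂ))
    (t : ℤ) (h : t ≠ n₀) : onePt k n₀ Q t = 1 := by
  rw [onePt, dif_neg h]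

variable (d : ∀ n : ℤ, Fin (k n) → ℤ)

/-- the full gradedness condition on a family -/
def Graded (M : Fam k) : Prop :=
  ∀ (n : ℤ) (i : Fin (k (n + 1))) (j : Fin (k n)), GE N (d n j - d (n + 1) i) (M n i j)

/-- an entry is an isolated pivot -/
def Isolated (M : Fam k) (n : ℤ) (i : Fin (k (n + 1))) (j : Fin (k n)) : Prop :=
  (∀ j', M n i j' ≠ 0 → j' = j) ∧
  (∀ i', M n i' j ≠ 0 → i' = i) ∧
  (∀ t : Fin (k (n + 1 + 1)), M (n + 1) t i = 0) ∧
  (∀ (t : ℤ), t + 1 = n → ∀ (j' : Fin (k (t + 1))) (l : Fin (k t)),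
    (j' : ℕ) = (j : ℕ) → M t j' l = 0)


section round

variable (M : Fam k) (n : ℤ) (i : Fin (k (n + 1))) (j : Fin (k n))

/-- coefficients used to clear the pivot column -/
noncomputable def uvec : Fin (k (n + 1)) → Polynomial ℂ := fun a =>
  if a = i then 0 else
    -(C ((M n a j).leadingCoeff * ((M n i j).leadingCoeff)⁻¹) *
      X ^ ((M n a j).natDegree - (M n i j).natDegree))

/-- coefficients used to clear the pivot row -/
noncomputable def wvec : Fin (k n) → Polynomial ℂ := fun b =>
  if b = j then 0 else
    -(C ((M n i b).leadingCoeff * ((M n i j).leadingCoeff)⁻¹) *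
      X ^ ((M n i b).natDegree - (M n i j).natDegree))

lemma uvec_self : uvec k M n i j i = 0 := if_pos rfl

lemma wvec_self : wvec k M n i j j = 0 := if_pos rfl

lemma uvec_of_zero (a : Fin (k (n + 1))) (h : M n a j = 0) : uvec k M n i j a = 0 := by
  unfold uvec
  split
  · rfl
  · simp [h]

lemma wvec_of_zero (b : Fin (k n)) (h : M n i b = 0) : wvec k M n i j b = 0 := by
  unfold wvec
  split
  · rfl
  · simp [h]

lemma uvec_mul (hg : Graded N k d M) (hnz : M n i j ≠ 0)
    (hminc : ∀ a, M n a j ≠ 0 → (M n i j).natDegree ≤ (M n a j).natDegree)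
    (a : Fin (k (n + 1))) (ha : a ≠ i) :
    uvec k M n i j a * M n i j = -(M n a j) := by
  by_cases h0 : M n a j = 0
  · rw [uvec_of_zero k M n i j a h0, h0, zero_mul, neg_zero]
  obtain ⟨hpe, hlc, -⟩ := GE.elim N (hg n i j) hnz
  obtain ⟨hpe', hlc', -⟩ := GE.elim N (hg n a j) h0
  rw [uvec]
  simp only [if_neg ha]
  rw [neg_mul, neg_inj]
  set c := (M n i j).leadingCoeff with hc
  set m := (M n i j).natDegree with hm
  set c' := (M n a j).leadingCoeff with hc'
  set m' := (M n a j).natDegree with hm'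
  rw [hpe, hpe']
  rw [mul_mul_mul_comm, ← C_mul, ← pow_add, Nat.sub_add_cancel (hminc a h0)]
  congr 2
  field_simp

lemma wvec_mul (hg : Graded N k d M) (hnz : M n i j ≠ 0)
    (hminr : ∀ b, M n i b ≠ 0 → (M n i j).natDegree ≤ (M n i b).natDegree)
    (b : Fin (k n)) (hb : b ≠ j) :
    M n i j * wvec k M n i j b = -(M n i b) := by
  by_cases h0 : M n i b = 0
  · rw [wvec_of_zero k M n i j b h0, h0, mul_zero, neg_zero]
  obtain ⟨hpe, hlc, -⟩ := GE.elim N (hg n i j) hnz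
  obtain ⟨hpe', hlc', -⟩ := GE.elim N (hg n i b) h0
  rw [wvec]
  simp only [if_neg hb]
  rw [mul_neg, neg_inj]
  set c := (M n i j).leadingCoeff with hc
  set m := (M n i j).natDegree with hm
  set c' := (M n i b).leadingCoeff with hc'
  set m' := (M n i b).natDegree with hm'
  rw [hpe, hpe']
  rw [mul_mul_mul_comm, ← C_mul, ← pow_add, Nat.add_sub_cancel' (hminr b h0)]
  congr 2
  field_simp

lemma GE_uvec (hg : Graded N k d M) (hnz : M n i j ≠ 0)
    (hminc : ∀ a, M n a j ≠ 0 → (M n i j).natDegree ≤ (M n a j).natDegree)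
    (a : Fin (k (n + 1))) :
    GE N (d n j - d (n + 1) a - 2 * (N : ℤ) * (M n i j).natDegree) (uvec k M n i j a) := by
  by_cases ha : a = i
  · subst ha
    rw [uvec_self]
    exact GE.zero N _
  by_cases h0 : M n a j = 0
  · rw [uvec_of_zero k M n i j a h0]
    exact GE.zero N _
  obtain ⟨-, hlc, -⟩ := GE.elim N (hg n i j) hnz
  obtain ⟨-, hlc', hδ'⟩ := GE.elim N (hg n a j) h0
  rw [uvec]
  simp only [if_neg ha]
  refine GE.neg N (Or.inr ⟨_, _, mul_ne_zero hlc' (inv_ne_zero hlc), rfl, ?_⟩)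
  rw [Nat.cast_sub (hminc a h0)]
  rw [mul_sub]
  linarith [hδ']

lemma GE_wvec (hg : Graded N k d M) (hnz : M n i j ≠ 0)
    (hminr : ∀ b, M n i b ≠ 0 → (M n i j).natDegree ≤ (M n i b).natDegree)
    (b : Fin (k n)) :
    GE N (d n b - d (n + 1) i - 2 * (N : ℤ) * (M n i j).natDegree) (wvec k M n i j b) := by
  by_cases hb : b = j
  · subst hb
    rw [wvec_self]
    exact GE.zero N _
  by_cases h0 : M n i b = 0
  · rw [wvec_of_zero k M n i j b h0]
    exact GE.zero N _
  obtain ⟨-, hlc, -⟩ := GE.elim N (hg n i j) hnz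
  obtain ⟨-, hlc', hδ'⟩ := GE.elim N (hg n i b) h0
  rw [wvec]
  simp only [if_neg hb]
  refine GE.neg N (Or.inr ⟨_, _, mul_ne_zero hlc' (inv_ne_zero hlc), rfl, ?_⟩)
  rw [Nat.cast_sub (hminr b h0)]
  rw [mul_sub]
  linarith [hδ']

/-- change of basis: clear pivot row operations at `n`, pivot column operations at `n+1` -/
noncomputable def Pr : ∀ t : ℤ, Matrix (Fin (k t)) (Fin (k t)) (Polynomial ℂ) :=
  fun t => onePt k n (1 - rowMat j (wvec k M n i j)) t *
    onePt k (n + 1) (1 + colMat i (uvec k M n i j)) t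

noncomputable def PrInv : ∀ t : ℤ, Matrix (Fin (k t)) (Fin (k t)) (Polynomial ℂ) :=
  fun t => onePt k (n + 1) (1 - colMat i (uvec k M n i j)) t *
    onePt k n (1 + rowMat j (wvec k M n i j)) t

/-- the transformed family -/
noncomputable def newM : Fam k :=
  fun t => Pr k M n i j (t + 1) * M t * PrInv k M n i j t

lemma Pr_mul_PrInv (t : ℤ) : Pr k M n i j t * PrInv k M n i j t = 1 := by
  by_cases h1 : t = n
  · subst h1
    rw [Pr, PrInv, onePt_same, onePt_other k (t + 1) _ t (by omega),
      onePt_other k (t + 1) _ t (by omega), onePt_same, mul_one, one_mul]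
    exact one_sub_mul_one_add _ (rowMat_sq j _ (wvec_self k M t i j))
  by_cases h2 : t = n + 1
  · subst h2
    rw [Pr, PrInv, onePt_same, onePt_other k n _ (n + 1) (by omega),
      onePt_other k n _ (n + 1) (by omega), onePt_same, mul_one, one_mul]
    exact one_add_mul_one_sub _ (colMat_sq i _ (uvec_self k M n i j))
  · rw [Pr, PrInv, onePt_other k n _ t h1, onePt_other k (n + 1) _ t h2,
      onePt_other k (n + 1) _ t h2, onePt_other k n _ t h1, mul_one, one_mul]

lemma PrInv_mul_Pr (t : ℤ) : PrInv k M n i j t * Pr k M n i j t = 1 := by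
  by_cases h1 : t = n
  · subst h1
    rw [Pr, PrInv, onePt_same, onePt_other k (t + 1) _ t (by omega),
      onePt_other k (t + 1) _ t (by omega), onePt_same, mul_one, one_mul]
    exact one_add_mul_one_sub _ (rowMat_sq j _ (wvec_self k M t i j))
  by_cases h2 : t = n + 1
  · subst h2
    rw [Pr, PrInv, onePt_same, onePt_other k n _ (n + 1) (by omega),
      onePt_other k n _ (n + 1) (by omega), onePt_same, mul_one, one_mul]
    exact one_sub_mul_one_add _ (colMat_sq i _ (uvec_self k M n i j))
  · rw [Pr, PrInv, onePt_other k n _ t h1, onePt_other k (n + 1) _ t h2,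
      onePt_other k (n + 1) _ t h2, onePt_other k n _ t h1, mul_one, one_mul]

lemma det_Pr (t : ℤ) : IsUnit (Pr k M n i j t).det := by
  have h := congrArg Matrix.det (Pr_mul_PrInv k M n i j t)
  rw [Matrix.det_mul, Matrix.det_one] at h
  exact IsUnit.of_mul_eq_one _ h

lemma newM_chain (t : ℤ) :
    Pr k M n i j (t + 1) * M t = newM k M n i j t * Pr k M n i j t := by
  rw [newM, Matrix.mul_assoc, Matrix.mul_assoc, PrInv_mul_Pr, Matrix.mul_one]

lemma newM_sq (hc : ∀ t : ℤ, M (t + 1) * M t = 0) (t : ℤ) :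
    newM k M n i j (t + 1) * newM k M n i j t = 0 := by
  rw [newM, newM]
  calc Pr k M n i j (t + 1 + 1) * M (t + 1) * PrInv k M n i j (t + 1) *
      (Pr k M n i j (t + 1) * M t * PrInv k M n i j t)
      = Pr k M n i j (t + 1 + 1) * (M (t + 1) *
        (PrInv k M n i j (t + 1) * Pr k M n i j (t + 1)) * M t) * PrInv k M n i j t := by
        simp only [Matrix.mul_assoc]
    _ = 0 := by
        rw [PrInv_mul_Pr, Matrix.mul_one, hc t]
        simp

lemma newM_at_n :
    newM k M n i j n =
      (1 + colMat i (uvec k M n i j)) * M n * (1 + rowMat j (wvec k M n i j)) := by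
  rw [newM, Pr, PrInv, onePt_other k n _ (n + 1) (by omega), onePt_same,
    onePt_other k (n + 1) _ n (by omega), onePt_same, one_mul, one_mul]

lemma newM_at_succ :
    newM k M n i j (n + 1) = M (n + 1) * (1 - colMat i (uvec k M n i j)) := by
  rw [newM, Pr, PrInv, onePt_other k n _ (n + 1 + 1) (by omega),
    onePt_other k (n + 1) _ (n + 1 + 1) (by omega), onePt_same,
    onePt_other k n _ (n + 1) (by omega), mul_one, Matrix.mul_one, Matrix.one_mul]

lemma newM_other (t : ℤ) (h1 : t ≠ n) (h2 : t ≠ n + 1) (h3 : t + 1 ≠ n) :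
    newM k M n i j t = M t := by
  rw [newM, Pr, PrInv, onePt_other k n _ (t + 1) h3, onePt_other k (n + 1) _ (t + 1) (by omega),
    onePt_other k (n + 1) _ t h2, onePt_other k n _ t h1, mul_one, mul_one,
    Matrix.one_mul, Matrix.mul_one]

lemma entry_formula (a : Fin (k (n + 1))) (b : Fin (k n)) :
    newM k M n i j n a b =
      M n a b + uvec k M n i j a * M n i b +
        (M n a j + uvec k M n i j a * M n i j) * wvec k M n i j b := by
  rw [newM_at_n, Matrix.add_mul, Matrix.one_mul, Matrix.mul_add, Matrix.mul_one]
  rw [Matrix.add_apply, Matrix.add_apply, colMat_mul, mul_rowMat, Matrix.add_apply, colMat_mul]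

lemma G3 (a : Fin (k (n + 1 + 1))) (b : Fin (k (n + 1))) :
    newM k M n i j (n + 1) a b =
      M (n + 1) a b - (if b = i then ∑ s, M (n + 1) a s * uvec k M n i j s else 0) := by
  rw [newM_at_succ, Matrix.mul_sub, Matrix.mul_one, Matrix.sub_apply, mul_colMat]

variable {k M n i j}

lemma G1 (hg : Graded N k d M) (hnz : M n i j ≠ 0)
    (hminr : ∀ b, M n i b ≠ 0 → (M n i j).natDegree ≤ (M n i b).natDegree)
    (b : Fin (k n)) :
    newM k M n i j n i b = if b = j then M n i j else 0 := by
  rw [entry_formula]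
  simp only [uvec_self, zero_mul, add_zero]
  by_cases hb : b = j
  · subst hb
    rw [wvec_self, mul_zero, add_zero, if_pos rfl]
  · rw [wvec_mul N k d M n i j hg hnz hminr b hb, if_neg hb]
    ring

lemma G2 (hg : Graded N k d M) (hnz : M n i j ≠ 0)
    (hminc : ∀ a, M n a j ≠ 0 → (M n i j).natDegree ≤ (M n a j).natDegree)
    (a : Fin (k (n + 1))) (ha : a ≠ i) (b : Fin (k n)) :
    newM k M n i j n a b = M n a b + uvec k M n i j a * M n i b := by
  rw [entry_formula, uvec_mul N k d M n i j hg hnz hminc a ha]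
  ring

lemma G2' (hg : Graded N k d M) (hnz : M n i j ≠ 0)
    (hminc : ∀ a, M n a j ≠ 0 → (M n i j).natDegree ≤ (M n a j).natDegree)
    (a : Fin (k (n + 1))) (ha : a ≠ i) :
    newM k M n i j n a j = 0 := by
  rw [entry_formula, uvec_mul N k d M n i j hg hnz hminc a ha, wvec_self, mul_zero]
  ring

end round

section roundPred

variable (M : Fam k) (t : ℤ) (i : Fin (k (t + 1 + 1))) (j : Fin (k (t + 1)))

lemma newM_at_pred :
    newM k M (t + 1) i j t = (1 - rowMat j (wvec k M (t + 1) i j)) * M t := by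
  rw [newM, Pr, PrInv, onePt_same, onePt_other k (t + 1 + 1) _ (t + 1) (by omega),
    onePt_other k (t + 1 + 1) _ t (by omega), onePt_other k (t + 1) _ t (by omega),
    mul_one, mul_one, Matrix.mul_one]

lemma G4 (a : Fin (k (t + 1))) (b : Fin (k t)) :
    newM k M (t + 1) i j t a b =
      M t a b - (if a = j then ∑ s, wvec k M (t + 1) i j s * M t s b else 0) := by
  rw [newM_at_pred, Matrix.sub_mul, Matrix.one_mul, Matrix.sub_apply, rowMat_mul]

end roundPred

section roundMain

variable {M : Fam k} {n : ℤ} {i : Fin (k (n + 1))} {j : Fin (k n)}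

lemma graded_newM (hN : 0 < N) (hg : Graded N k d M) (hnz : M n i j ≠ 0)
    (hminc : ∀ a, M n a j ≠ 0 → (M n i j).natDegree ≤ (M n a j).natDegree)
    (hminr : ∀ b, M n i b ≠ 0 → (M n i j).natDegree ≤ (M n i b).natDegree) :
    Graded N k d (newM k M n i j) := by
  obtain ⟨-, -, drel⟩ := GE.elim N (hg n i j) hnz
  intro t a b
  by_cases h1 : t = n
  · subst h1
    by_cases ha : a = i
    · subst ha
      rw [G1 N d hg hnz hminr b]
      by_cases hb : b = j
      · subst hb
        rw [if_pos rfl]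
        exact hg _ _ _
      · rw [if_neg hb]
        exact GE.zero N _
    · rw [G2 N d hg hnz hminc a ha b]
      refine GE.add N hN (hg _ a b) (GE.mul N (GE_uvec N k d M _ i j hg hnz hminc a) (hg _ i b) ?_)
      linarith [drel]
  by_cases h2 : t = n + 1
  · subst h2
    rw [G3 k M n i j a b]
    by_cases hb : b = i
    · rw [if_pos hb, hb, sub_eq_add_neg]
      refine GE.add N hN (hg _ a i) (GE.neg N (GE.sum N hN _ _ ?_))
      intro s _
      refine GE.mul N (hg _ a s) (GE_uvec N k d M n i j hg hnz hminc s) ?_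
      linarith [drel]
    · rw [if_neg hb, sub_zero]
      exact hg _ a b
  by_cases h3 : t + 1 = n
  · subst h3
    rw [G4 k M t i j a b]
    by_cases haj : a = j
    · rw [if_pos haj, haj, sub_eq_add_neg]
      refine GE.add N hN (hg _ j b) (GE.neg N (GE.sum N hN _ _ ?_))
      intro s _
      refine GE.mul N (GE_wvec N k d M _ i j hg hnz hminr s) (hg _ s b) ?_
      linarith [drel]
    · rw [if_neg haj, sub_zero]
      exact hg _ a b
  · rw [newM_other k M n i j t h1 h2 h3]
    exact hg _ a b

lemma col_formula (hg : Graded N k d M) (hnz : M n i j ≠ 0)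
    (hminc : ∀ a, M n a j ≠ 0 → (M n i j).natDegree ≤ (M n a j).natDegree)
    (hminr : ∀ b, M n i b ≠ 0 → (M n i j).natDegree ≤ (M n i b).natDegree)
    (s : Fin (k (n + 1))) :
    newM k M n i j n s j = if s = i then M n i j else 0 := by
  by_cases hs : s = i
  · rw [if_pos hs, hs, G1 N d hg hnz hminr j, if_pos rfl]
  · rw [if_neg hs, G2' N d hg hnz hminc s hs]

lemma isolated_new (hg : Graded N k d M) (hnz : M n i j ≠ 0)
    (hminc : ∀ a, M n a j ≠ 0 → (M n i j).natDegree ≤ (M n a j).natDegree)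
    (hminr : ∀ b, M n i b ≠ 0 → (M n i j).natDegree ≤ (M n i b).natDegree)
    (hc : ∀ t : ℤ, M (t + 1) * M t = 0) :
    Isolated k (newM k M n i j) n i j := by
  refine ⟨?_, ?_, ?_, ?_⟩
  · intro j' hne
    by_contra hj
    rw [G1 N d hg hnz hminr j', if_neg hj] at hne
    exact hne rfl
  · intro i' hne
    by_contra hi
    rw [G2' N d hg hnz hminc i' hi] at hne
    exact hne rfl
  · intro a'
    have hz := newM_sq k M n i j hc n
    have he : (newM k M n i j (n + 1) * newM k M n i j n) a' j = 0 := by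
      rw [hz]
      rfl
    rw [Matrix.mul_apply] at he
    simp only [col_formula N k d hg hnz hminc hminr, mul_ite, mul_zero] at he
    rw [Finset.sum_ite_eq' Finset.univ i (fun s => newM k M n i j (n + 1) a' s * M n i j),
      if_pos (Finset.mem_univ i)] at he
    exact (mul_eq_zero.mp he).resolve_right hnz
  · intro t ht j' l hval
    subst ht
    have hj' : j' = j := Fin.ext hval
    subst hj'
    have hz := newM_sq k M (t + 1) i j' hc t
    have he : (newM k M (t + 1) i j' (t + 1) * newM k M (t + 1) i j' t) i l = 0 := by
      rw [hz]
      rfl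
    rw [Matrix.mul_apply] at he
    simp only [G1 N d hg hnz hminr, ite_mul, zero_mul] at he
    rw [Finset.sum_ite_eq' Finset.univ j'
      (fun s => M (t + 1) i j' * newM k M (t + 1) i j' t s l),
      if_pos (Finset.mem_univ j')] at he
    exact (mul_eq_zero.mp he).resolve_left hnz

lemma iso_pres (hg : Graded N k d M) (hnz : M n i j ≠ 0)
    (hniso : ¬ Isolated k M n i j)
    (hminc : ∀ a, M n a j ≠ 0 → (M n i j).natDegree ≤ (M n a j).natDegree)
    (hminr : ∀ b, M n i b ≠ 0 → (M n i j).natDegree ≤ (M n i b).natDegree)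
    (n₁ : ℤ) (i₁ : Fin (k (n₁ + 1))) (j₁ : Fin (k n₁))
    (h : Isolated k M n₁ i₁ j₁) : Isolated k (newM k M n i j) n₁ i₁ j₁ := by
  obtain ⟨h1, h2, h3, h4⟩ := h
  by_cases hA : n₁ = n
  · -- pivot in the same matrix
    subst hA
    have hii : i₁ ≠ i := by
      intro he
      subst he
      have := h1 j hnz
      subst this
      exact hniso ⟨h1, h2, h3, h4⟩
    have hjj : j₁ ≠ j := by
      intro he
      subst he
      have := h2 i hnz
      subst this
      exact hniso ⟨h1, h2, h3, h4⟩
    have hz1 : M n₁ i₁ j = 0 := by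
      by_contra hne
      exact hjj (h1 j hne).symm
    have hz2 : M n₁ i j₁ = 0 := by
      by_contra hne
      exact hii (h2 i hne).symm
    refine ⟨?_, ?_, ?_, ?_⟩
    · intro j' hne
      rw [G2 N d hg hnz hminc i₁ hii j', uvec_of_zero k M n₁ i j i₁ hz1, zero_mul,
        add_zero] at hne
      exact h1 j' hne
    · intro i' hne
      by_cases hi' : i' = i
      · rw [hi', G1 N d hg hnz hminr j₁, if_neg hjj] at hne
        exact absurd rfl hne
      · rw [G2 N d hg hnz hminc i' hi' j₁, hz2, mul_zero, add_zero] at hne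
        exact h2 i' hne
    · intro t
      rw [G3 k M n₁ i j t i₁, if_neg hii, sub_zero]
      exact h3 t
    · intro t ht j'' l hv
      subst ht
      have hj'' : j'' = j₁ := Fin.ext hv
      subst hj''
      rw [G4 k M t i j j'' l, if_neg hjj, sub_zero]
      exact h4 t rfl j'' l rfl
  by_cases hB : n₁ = n + 1
  · -- pivot one step to the right
    subst hB
    have hrow : ∀ b, M n j₁ b = 0 := fun b => h4 n rfl j₁ b rfl
    have hji : j₁ ≠ i := by
      intro he
      rw [← he] at hnz
      exact hnz (hrow j)
    have huj₁ : uvec k M n i j j₁ = 0 := uvec_of_zero k M n i j j₁ (hrow j)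
    have hterm : ∀ s, M (n + 1) i₁ s * uvec k M n i j s = 0 := by
      intro s
      by_cases hs : M (n + 1) i₁ s = 0
      · rw [hs, zero_mul]
      · rw [h1 s hs, huj₁, mul_zero]
    have hrowfix : ∀ j', newM k M n i j (n + 1) i₁ j' = M (n + 1) i₁ j' := by
      intro j'
      rw [G3 k M n i j i₁ j']
      by_cases hj' : j' = i
      · rw [if_pos hj', Finset.sum_eq_zero fun s _ => hterm s, sub_zero]
      · rw [if_neg hj', sub_zero]
    refine ⟨?_, ?_, ?_, ?_⟩
    · intro j' hne
      rw [hrowfix j'] at hne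
      exact h1 j' hne
    · intro i' hne
      rw [G3 k M n i j i' j₁, if_neg hji, sub_zero] at hne
      exact h2 i' hne
    · intro t
      rw [newM_other k M n i j (n + 1 + 1) (by omega) (by omega) (by omega)]
      exact h3 t
    · intro t ht j'' l hv
      have ht' : t = n := by omega
      subst ht'
      have hj'' : j'' = j₁ := Fin.ext hv
      subst hj''
      by_cases hji' : j'' = i
      · exact absurd hji' hji
      · rw [G2 N d hg hnz hminc j'' hji' l, hrow l, huj₁, zero_mul, add_zero]
  by_cases hC : n₁ = n + 1 + 1
  · -- pivot two steps to the right
    subst hC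
    refine ⟨?_, ?_, ?_, ?_⟩
    · intro j' hne
      rw [newM_other k M n i j (n + 1 + 1) (by omega) (by omega) (by omega)] at hne
      exact h1 j' hne
    · intro i' hne
      rw [newM_other k M n i j (n + 1 + 1) (by omega) (by omega) (by omega)] at hne
      exact h2 i' hne
    · intro t
      rw [newM_other k M n i j (n + 1 + 1 + 1) (by omega) (by omega) (by omega)]
      exact h3 t
    · intro t ht j'' l hv
      have ht' : t = n + 1 := by omega
      subst ht'
      have hrow : ∀ (j' : Fin (k (n + 1 + 1))) (l : Fin (k (n + 1))),
          (j' : ℕ) = (j₁ : ℕ) → M (n + 1) j' l = 0 := h4 (n + 1) rfl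
      rw [G3 k M n i j j'' l]
      rw [hrow j'' l hv]
      by_cases hl : l = i
      · rw [if_pos hl, Finset.sum_eq_zero fun s _ => by rw [hrow j'' s hv, zero_mul],
          zero_sub, neg_eq_zero]
      · rw [if_neg hl, sub_zero]
  by_cases hD : n₁ + 1 = n
  · -- pivot one step to the left
    subst hD
    have hcol : ∀ t, M (n₁ + 1) t i₁ = 0 := h3
    have hij : i₁ ≠ j := by
      intro he
      rw [← he] at hnz
      exact hnz (hcol i)
    have hwi₁ : wvec k M (n₁ + 1) i j i₁ = 0 := wvec_of_zero k M (n₁ + 1) i j i₁ (hcol i)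
    have hcolfix : ∀ a, newM k M (n₁ + 1) i j n₁ a j₁ = M n₁ a j₁ := by
      intro a
      rw [G4 k M n₁ i j a j₁]
      by_cases ha : a = j
      · rw [if_pos ha, Finset.sum_eq_zero, sub_zero]
        intro s _
        by_cases hs : M n₁ s j₁ = 0
        · rw [hs, mul_zero]
        · rw [h2 s hs, hwi₁, zero_mul]
      · rw [if_neg ha, sub_zero]
    refine ⟨?_, ?_, ?_, ?_⟩
    · intro j' hne
      rw [G4 k M n₁ i j i₁ j', if_neg hij, sub_zero] at hne
      exact h1 j' hne
    · intro i' hne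
      rw [hcolfix i'] at hne
      exact h2 i' hne
    · intro t
      by_cases ht : t = i
      · rw [ht, G1 N d hg hnz hminr i₁, if_neg hij]
      · rw [G2 N d hg hnz hminc t ht i₁, hcol t, hcol i, mul_zero, add_zero]
    · intro t ht j'' l hv
      rw [newM_other k M (n₁ + 1) i j t (by omega) (by omega) (by omega)]
      exact h4 t ht j'' l hv
  by_cases hE : n₁ + 1 + 1 = n
  · -- pivot two steps to the left
    subst hE
    refine ⟨?_, ?_, ?_, ?_⟩
    · intro j' hne
      rw [newM_other k M (n₁ + 1 + 1) i j n₁ (by omega) (by omega) (by omega)] at hne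
      exact h1 j' hne
    · intro i' hne
      rw [newM_other k M (n₁ + 1 + 1) i j n₁ (by omega) (by omega) (by omega)] at hne
      exact h2 i' hne
    · intro t
      rw [G4 k M (n₁ + 1) i j t i₁]
      rw [h3 t]
      by_cases ht : t = j
      · rw [if_pos ht, Finset.sum_eq_zero fun s _ => by rw [h3 s, mul_zero],
          zero_sub, neg_eq_zero]
      · rw [if_neg ht, sub_zero]
    · intro t ht j'' l hv
      rw [newM_other k M (n₁ + 1 + 1) i j t (by omega) (by omega) (by omega)]
      exact h4 t ht j'' l hv
  · -- pivot far away
    refine ⟨?_, ?_, ?_, ?_⟩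
    · intro j' hne
      rw [newM_other k M n i j n₁ hA hB (by omega)] at hne
      exact h1 j' hne
    · intro i' hne
      rw [newM_other k M n i j n₁ hA hB (by omega)] at hne
      exact h2 i' hne
    · intro t
      rw [newM_other k M n i j (n₁ + 1) (by omega) (by omega) (by omega)]
      exact h3 t
    · intro t ht j'' l hv
      rw [newM_other k M n i j t (by omega) (by omega) (by omega)]
      exact h4 t ht j'' l hv

end roundMain

/-- positions of rows -/
def U := (t : ℤ) × Fin (k (t + 1))

/-- positions of entries -/
def T := (t : ℤ) × (Fin (k (t + 1)) × Fin (k t))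

lemma finite_supp (hbdd : {n : ℤ | k n ≠ 0}.Finite) : {t : ℤ | k (t + 1) ≠ 0}.Finite := by
  have h : {t : ℤ | k (t + 1) ≠ 0} = (fun t : ℤ => t + 1) ⁻¹' {n | k n ≠ 0} := rfl
  rw [h]
  exact Set.Finite.preimage (Set.injOn_of_injective (add_left_injective 1)) hbdd

lemma finite_U (hbdd : {n : ℤ | k n ≠ 0}.Finite) : Finite (U k) := by
  haveI := (finite_supp k hbdd).to_subtype
  refine Finite.of_injective
    (fun x : U k => (⟨⟨x.1, x.2.pos.ne'⟩, x.2⟩ :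
      Σ t : {t : ℤ | k (t + 1) ≠ 0}, Fin (k (t.1 + 1)))) ?_
  rintro ⟨t, v⟩ ⟨t', v'⟩ hab
  injection hab with h1 h2
  have ht : t = t' := congrArg Subtype.val h1
  subst ht
  rw [heq_iff_eq] at h2
  subst h2
  rfl

lemma finite_T (hbdd : {n : ℤ | k n ≠ 0}.Finite) : Finite (T k) := by
  haveI := (finite_supp k hbdd).to_subtype
  refine Finite.of_injective
    (fun x : T k => (⟨⟨x.1, x.2.1.pos.ne'⟩, x.2⟩ :
      Σ t : {t : ℤ | k (t + 1) ≠ 0}, Fin (k (t.1 + 1)) × Fin (k t.1))) ?_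
  rintro ⟨t, v⟩ ⟨t', v'⟩ hab
  injection hab with h1 h2
  have ht : t = t' := congrArg Subtype.val h1
  subst ht
  rw [heq_iff_eq] at h2
  subst h2
  rfl

/-- rows containing an isolated pivot -/
def isoRows (M : Fam k) : Set (U k) := {x | ∃ j₁, Isolated k M x.1 x.2 j₁}

lemma reduce (hN : 0 < N) (hbdd : {n : ℤ | k n ≠ 0}.Finite) :
    ∀ (v : ℕ) (M : Fam k), Graded N k d M → (∀ t, M (t + 1) * M t = 0) →
    Nat.card (U k) - (isoRows k M).ncard = v →
    ∃ (P : ∀ t : ℤ, Matrix (Fin (k t)) (Fin (k t)) (Polynomial ℂ)) (M' : Fam k),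
      (∀ t, IsUnit (P t).det) ∧ (∀ t, P (t + 1) * M t = M' t * P t) ∧
      Graded N k d M' ∧
      (∀ (t : ℤ) (a : Fin (k (t + 1))) (b : Fin (k t)),
        M' t a b ≠ 0 → Isolated k M' t a b) := by
  haveI : Finite (U k) := finite_U k hbdd
  haveI : Finite (T k) := finite_T k hbdd
  intro v
  induction v using Nat.strong_induction_on with
  | _ v ih =>
  intro M hg hc hv
  by_cases hall : ∀ (t : ℤ) (a : Fin (k (t + 1))) (b : Fin (k t)),
      M t a b ≠ 0 → Isolated k M t a b
  · exact ⟨fun _ => 1, M, fun _ => by simp, fun t => by rw [Matrix.one_mul, Matrix.mul_one],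
      hg, hall⟩
  · push_neg at hall
    obtain ⟨t₀, a₀, b₀, hne₀, hniso₀⟩ := hall
    set Z : Set (T k) := {x | M x.1 x.2.1 x.2.2 ≠ 0 ∧ ¬ Isolated k M x.1 x.2.1 x.2.2} with hZ
    have hZne : Z.Nonempty := ⟨⟨t₀, a₀, b₀⟩, hne₀, hniso₀⟩
    obtain ⟨x, hxZ, hxmin⟩ :=
      Set.exists_min_image Z (fun x => (M x.1 x.2.1 x.2.2).natDegree) Z.toFinite hZne
    obtain ⟨n, i, j⟩ := x
    obtain ⟨hnz, hniso⟩ := hxZ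
    have hminc : ∀ a, M n a j ≠ 0 → (M n i j).natDegree ≤ (M n a j).natDegree := by
      intro a ha
      by_cases hai : a = i
      · rw [hai]
      · refine hxmin ⟨n, a, j⟩ ⟨ha, fun hiso => hai (hiso.2.1 i hnz).symm⟩
    have hminr : ∀ b, M n i b ≠ 0 → (M n i j).natDegree ≤ (M n i b).natDegree := by
      intro b hb
      by_cases hbj : b = j
      · rw [hbj]
      · refine hxmin ⟨n, i, b⟩ ⟨hb, fun hiso => hbj (hiso.1 j hnz).symm⟩
    have hg' := graded_newM N k d hN hg hnz hminc hminr
    have hc' := newM_sq k M n i j hc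
    have hiso' := isolated_new N k d hg hnz hminc hminr hc
    have hpres := iso_pres N k d hg hnz hniso hminc hminr
    have hsub : isoRows k M ⊆ isoRows k (newM k M n i j) := by
      rintro ⟨t, a⟩ ⟨j₁, hj₁⟩
      exact ⟨j₁, hpres t a j₁ hj₁⟩
    have hmem : (⟨n, i⟩ : U k) ∈ isoRows k (newM k M n i j) := ⟨j, hiso'⟩
    have hnmem : (⟨n, i⟩ : U k) ∉ isoRows k M := by
      rintro ⟨j₁, hj₁⟩
      have hjj : j = j₁ := hj₁.1 j hnz
      exact hniso (hjj.symm ▸ hj₁)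
    have hlt : (isoRows k M).ncard < (isoRows k (newM k M n i j)).ncard :=
      Set.ncard_lt_ncard ⟨hsub, fun hss => hnmem (hss hmem)⟩ (Set.toFinite _)
    have hle : (isoRows k (newM k M n i j)).ncard ≤ Nat.card (U k) := by
      rw [← Set.ncard_univ]
      exact Set.ncard_le_ncard (Set.subset_univ _) (Set.toFinite _)
    obtain ⟨P₂, M', hdet₂, hchain₂, hg₂, hall₂⟩ :=
      ih (Nat.card (U k) - (isoRows k (newM k M n i j)).ncard) (by omega)
        (newM k M n i j) hg' hc' rfl
    refine ⟨fun t => P₂ t * Pr k M n i j t, M', ?_, ?_, hg₂, hall₂⟩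
    · intro t
      rw [Matrix.det_mul]
      exact (hdet₂ t).mul (det_Pr k M n i j t)
    · intro t
      rw [Matrix.mul_assoc, newM_chain k M n i j t, ← Matrix.mul_assoc, hchain₂ t,
        Matrix.mul_assoc]

end Stmt6


/-- Let `N ≥ 1` and `R = ℂ[a]`.  Let `C` be a bounded cochain complex with
`C^n = R^{k n}`, degree functions `d n : Fin (k n) → ℤ`, and differentials given by
matrices `M n` whose entries are `0` or of the form `c·a^m` with `c ≠ 0` and
`d n j = d (n+1) i + 2N·m`.  Then `C` is isomorphic, as a cochain complex of
`R`-modules, to a finite direct sum of complexes each of which is either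
(1) a copy of `R` concentrated in a single degree with zero differentials, or
(2) `0 → R --a^m--> R → 0` concentrated in two consecutive degrees.

This is expressed concretely: there are invertible change-of-basis matrices `P n` and
new differential matrices `M' n` with `P (n+1) * M n = M' n * P n` (a chain map which
is an isomorphism in every degree), such that each nonzero entry of `M' n` is a power
`a^m`, each row and each column of `M' n` contains at most one nonzero entry, and no
basis vector both receives and emits a nonzero differential — i.e. the new basis
splits the complex into summands of types (1) and (2). -/
theorem stmt_6 (N : ℕ) (hN : 0 < N) (k : ℤ → ℕ)
    (d : ∀ n : ℤ, Fin (k n) → ℤ)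
    (M : ∀ n : ℤ, Matrix (Fin (k (n + 1))) (Fin (k n)) (Polynomial ℂ))
    (hbdd : {n : ℤ | k n ≠ 0}.Finite)
    (hcomp : ∀ n : ℤ, M (n + 1) * M n = 0)
    (hentries : ∀ (n : ℤ) (i : Fin (k (n + 1))) (j : Fin (k n)),
      M n i j = 0 ∨ ∃ (c : ℂ) (m : ℕ), c ≠ 0 ∧
        M n i j = Polynomial.C c * Polynomial.X ^ m ∧
        d n j = d (n + 1) i + 2 * (N : ℤ) * (m : ℤ)) :
    ∃ (P : ∀ n : ℤ, Matrix (Fin (k n)) (Fin (k n)) (Polynomial ℂ))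
      (M' : ∀ n : ℤ, Matrix (Fin (k (n + 1))) (Fin (k n)) (Polynomial ℂ)),
      -- the `P n` are isomorphisms in every degree ...
      (∀ n : ℤ, IsUnit (P n).det) ∧
      -- ... forming a chain map from `(C, M)` to the complex `(C, M')`
      (∀ n : ℤ, P (n + 1) * M n = M' n * P n) ∧
      -- every nonzero entry of `M'` is multiplication by `a^m` for some `m ≥ 0`
      (∀ (n : ℤ) (i : Fin (k (n + 1))) (j : Fin (k n)),
        M' n i j ≠ 0 → ∃ m : ℕ, M' n i j = Polynomial.X ^ m) ∧
      -- each row of `M' n` has at most one nonzero entry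
      (∀ (n : ℤ) (i : Fin (k (n + 1))) (j j' : Fin (k n)),
        M' n i j ≠ 0 → M' n i j' ≠ 0 → j = j') ∧
      -- each column of `M' n` has at most one nonzero entry
      (∀ (n : ℤ) (i i' : Fin (k (n + 1))) (j : Fin (k n)),
        M' n i j ≠ 0 → M' n i' j ≠ 0 → i = i') ∧
      -- no basis vector both receives and emits a nonzero differential:
      -- each basis vector lies in exactly one summand of type (1) or (2)
      (∀ (n : ℤ) (i : Fin (k (n + 1))),
        (∃ j : Fin (k n), M' n i j ≠ 0) →
          ∀ i' : Fin (k (n + 1 + 1)), M' (n + 1) i' i = 0) := by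
  classical
  have hg : Stmt6.Graded N k d M := by
    intro n i j
    rcases hentries n i j with h | ⟨c, m, hc, he, hd⟩
    · exact Or.inl h
    · exact Or.inr ⟨c, m, hc, he, by omega⟩
  obtain ⟨P₁, M₁, hdet₁, hchain₁, hg₁, hall₁⟩ :=
    Stmt6.reduce N k d hN hbdd (Nat.card (Stmt6.U k) - (Stmt6.isoRows k M).ncard) M hg hcomp rfl
  set s : ∀ t : ℤ, Fin (k t) → ℂ := fun t b =>
    if h : ∃ a, M₁ t a b ≠ 0 then (M₁ t h.choose b).leadingCoeff else 1 with hs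
  have hsne : ∀ (t : ℤ) (b : Fin (k t)), s t b ≠ 0 := by
    intro t b
    rw [hs]
    dsimp only
    split_ifs with h
    · exact Polynomial.leadingCoeff_ne_zero.mpr h.choose_spec
    · exact one_ne_zero
  set Q : ∀ t : ℤ, Matrix (Fin (k t)) (Fin (k t)) (Polynomial ℂ) :=
    fun t => Matrix.diagonal (fun b => Polynomial.C (s t b)) with hQ
  set M' : ∀ t : ℤ, Matrix (Fin (k (t + 1))) (Fin (k t)) (Polynomial ℂ) :=
    fun t => Q (t + 1) * M₁ t * Matrix.diagonal (fun b => Polynomial.C ((s t b)⁻¹)) with hM'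
  have hMent : ∀ (t : ℤ) (a : Fin (k (t + 1))) (b : Fin (k t)),
      M' t a b = Polynomial.C (s (t + 1) a) * M₁ t a b * Polynomial.C ((s t b)⁻¹) := by
    intro t a b
    rw [hM']
    dsimp only
    rw [hQ]
    dsimp only
    rw [Matrix.mul_diagonal, Matrix.diagonal_mul]
  have hnz_iff : ∀ (t : ℤ) (a : Fin (k (t + 1))) (b : Fin (k t)),
      M' t a b ≠ 0 ↔ M₁ t a b ≠ 0 := by
    intro t a b
    rw [hMent]
    simp [mul_eq_zero, hsne t b, hsne (t + 1) a]
  refine ⟨fun t => Q t * P₁ t, M', ?_, ?_, ?_, ?_, ?_, ?_⟩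
  · intro t
    rw [Matrix.det_mul]
    refine IsUnit.mul ?_ (hdet₁ t)
    rw [hQ]
    dsimp only
    rw [Matrix.det_diagonal, ← map_prod]
    exact Polynomial.isUnit_C.mpr
      (Finset.prod_ne_zero_iff.mpr fun b _ => hsne t b).isUnit
  · intro t
    have key : Q (t + 1) * M₁ t = M' t * Q t := by
      rw [hM']
      dsimp only
      conv_rhs => rw [hQ]
      dsimp only
      have hdd : (Matrix.diagonal fun b : Fin (k t) => Polynomial.C ((s t b)⁻¹)) *
          (Matrix.diagonal fun b : Fin (k t) => Polynomial.C (s t b)) = 1 := by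
        ext a b
        rw [Matrix.diagonal_mul_diagonal]
        rcases eq_or_ne a b with rfl | hab
        · rw [Matrix.diagonal_apply_eq, Matrix.one_apply_eq, ← Polynomial.C_mul,
            inv_mul_cancel₀ (hsne t a), Polynomial.C_1]
        · simp [Matrix.diagonal_apply_ne _ hab, Matrix.one_apply_ne hab]
      rw [Matrix.mul_assoc, hdd, Matrix.mul_one]
    rw [Matrix.mul_assoc, hchain₁ t, ← Matrix.mul_assoc, key, Matrix.mul_assoc]
  · intro n i j hne
    have hne₁ : M₁ n i j ≠ 0 := (hnz_iff n i j).mp hne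
    obtain ⟨c1, c2, c3, c4⟩ := hall₁ n i j hne₁
    obtain ⟨hpe, hlc, -⟩ := Stmt6.GE.elim N (hg₁ n i j) hne₁
    have hex : ∃ a, M₁ n a j ≠ 0 := ⟨i, hne₁⟩
    have hst : s n j = (M₁ n i j).leadingCoeff := by
      rw [hs]
      dsimp only
      rw [dif_pos hex, c2 _ hex.choose_spec]
    have hst' : s (n + 1) i = 1 := by
      rw [hs]
      dsimp only
      rw [dif_neg (by push_neg; exact c3)]
    set c := (M₁ n i j).leadingCoeff with hcdef
    set m := (M₁ n i j).natDegree with hmdef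
    refine ⟨m, ?_⟩
    rw [hMent, hst, hst', Polynomial.C_1, one_mul, hpe, mul_right_comm, ← Polynomial.C_mul,
      mul_inv_cancel₀ hlc, Polynomial.C_1, one_mul]
  · intro n i j j' h h'
    exact ((hall₁ n i j ((hnz_iff n i j).mp h)).1 j' ((hnz_iff n i j').mp h')).symm
  · intro n i i' j h h'
    exact ((hall₁ n i j ((hnz_iff n i j).mp h)).2.1 i' ((hnz_iff n i' j).mp h')).symm
  · rintro n i ⟨j, hne⟩ i'
    have hne₁ : M₁ n i j ≠ 0 := (hnz_iff n i j).mp hne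
    obtain ⟨c1, c2, c3, c4⟩ := hall₁ n i j hne₁
    rw [hMent, c3 i', mul_zero, zero_mul]
end
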